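/- Let Ω ⊂ ℝ^d be an ε-uniform domain with Whitney covering W, and let [Q,S] be an ε-admissible chain joining Q, S ∈ W with central cube Q_S. Then D(Q,S) ≈ Σ_{P∈[Q,S]} ℓ(P) ≈ ℓ(Q_S), with comparability constants depending only on ε and d. -/

import Mathlib

open MeasureTheory ENNReal

/-- An axis-parallel cube in `ℝ^d`, identified with the closed ball of radius `side/2`
around its center in the sup metric on `Fin d → ℝ`. -/
structure Cube (d : ℕ) where
  center : Fin d → ℝ
  side : ℝ
  side_pos : 0 < side

/-- The set of points of a cube. -/
def Cube.toSet {d : ℕ} (Q : Cube d) : Set (Fin d → ℝ) :=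
  Metric.closedBall Q.center (Q.side / 2)

/-- Distance between two sets. -/
noncomputable def setDist {d : ℕ} (A B : Set (Fin d → ℝ)) : ℝ :=
  sInf (Set.image2 dist A B)

/-- The long distance `D(Q,S) = ℓ(Q) + ℓ(S) + dist(Q,S)` between two cubes. -/
noncomputable def longDist {d : ℕ} (Q S : Cube d) : ℝ :=
  Q.side + S.side + setDist Q.toSet S.toSet

/-- A Whitney covering of `Ω`: a family of essentially disjoint (dyadic-type) cubes whose
union is `Ω`, with side-lengths comparable to the distance to `∂Ω`, and finite
superposition of the dilated cubes `50Q`. -/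
structure WhitneyCovering (d : ℕ) (Ω : Set (Fin d → ℝ)) where
  cubes : Set (Cube d)
  covers : (⋃ Q ∈ cubes, Q.toSet) = Ω
  essDisjoint : ∀ Q ∈ cubes, ∀ S ∈ cubes, Q ≠ S →
    interior Q.toSet ∩ interior S.toSet = ∅
  CW : ℝ
  one_le_CW : 1 ≤ CW
  dist_lb : ∀ Q ∈ cubes, CW * Q.side ≤ setDist Q.toSet (frontier Ω)
  dist_ub : ∀ Q ∈ cubes, setDist Q.toSet (frontier Ω) ≤ 4 * CW * Q.side
  finiteOverlap : ∃ N : ℕ, ∀ x : Fin d → ℝ,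
    {Q ∈ cubes | x ∈ Metric.closedBall Q.center (25 * Q.side)}.Finite ∧
    {Q ∈ cubes | x ∈ Metric.closedBall Q.center (25 * Q.side)}.ncard ≤ N

/-- `S ∈ SH_ρ(P)` : the cube `S` of the covering lies in the `ρ`-shadow of `P`, i.e.
`S ⊆ B(x_P, ρ ℓ(P))`. -/
def memShadow {d : ℕ} {Ω : Set (Fin d → ℝ)} (W : WhitneyCovering d Ω) (ρ : ℝ)
    (S P : Cube d) : Prop :=
  S ∈ W.cubes ∧ P ∈ W.cubes ∧ S.toSet ⊆ Metric.closedBall P.center (ρ * P.side)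

/-- An `ε`-admissible chain of Whitney cubes joining `Q` to `S`. -/
structure AdmissibleChain {d : ℕ} {Ω : Set (Fin d → ℝ)} (W : WhitneyCovering d Ω)
    (ε : ℝ) (Q S : Cube d) where
  M : ℕ
  M_pos : 0 < M
  c : Fin M → Cube d
  mem : ∀ j, c j ∈ W.cubes
  first : c ⟨0, M_pos⟩ = Q
  last : c ⟨M - 1, Nat.sub_lt M_pos Nat.one_pos⟩ = S
  neighbors : ∀ (j : ℕ) (h : j + 1 < M),
    ((c ⟨j, Nat.lt_of_succ_lt h⟩).toSet ∩ (c ⟨j + 1, h⟩).toSet).Nonempty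
  length_le : ∑ j, (c j).side ≤ ε⁻¹ * longDist Q S
  j₀ : Fin M
  growth₁ : ∀ j : Fin M, j ≤ j₀ → ε * longDist Q (c j) ≤ (c j).side
  growth₂ : ∀ j : Fin M, j₀ ≤ j → ε * longDist (c j) S ≤ (c j).side

/-- `Ω` (with Whitney covering `W`) is an `ε`-uniform domain: any two Whitney cubes are
joined by an `ε`-admissible chain. -/
def IsUniformDomain {d : ℕ} {Ω : Set (Fin d → ℝ)} (W : WhitneyCovering d Ω) (ε : ℝ) : Prop :=
  ∀ Q ∈ W.cubes, ∀ S ∈ W.cubes, Nonempty (AdmissibleChain W ε Q S)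

/-- The non-centered Hardy–Littlewood maximal function, taken over cubes
(closed balls in the sup metric on `Fin d → ℝ`) containing `x`. -/
noncomputable def maximal (d : ℕ) (g : (Fin d → ℝ) → ℝ≥0∞) (x : Fin d → ℝ) : ℝ≥0∞ :=
  ⨆ (c : Fin d → ℝ) (r : ℝ) (_ : 0 < r) (_ : x ∈ Metric.closedBall c r),
    (∫⁻ y in Metric.closedBall c r, g y) / volume (Metric.closedBall c r)

/-
The central cube `Q_S = Q_{j₀}` satisfies both growth conditions, so
`D(Q, Q_S) ≤ ε⁻¹ ℓ(Q_S)` and `D(Q_S, S) ≤ ε⁻¹ ℓ(Q_S)`; the triangle inequality for the long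
distance then gives `D(Q,S) ≤ 2ε⁻¹ ℓ(Q_S)`. Conversely `ℓ(Q_S) ≤ Σ_P ℓ(P) ≤ ε⁻¹ D(Q,S)`, the last
step being the length bound in the definition of an admissible chain.
-/

lemma setDist_nonneg {d : ℕ} (A B : Set (Fin d → ℝ)) : 0 ≤ setDist A B :=
  Real.sInf_nonneg (by rintro _ ⟨a, _, b, _, rfl⟩; exact dist_nonneg)

lemma setDist_le_dist {d : ℕ} {A B : Set (Fin d → ℝ)} {a b : Fin d → ℝ}
    (ha : a ∈ A) (hb : b ∈ B) : setDist A B ≤ dist a b :=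
  csInf_le ⟨0, by rintro _ ⟨u, _, v, _, rfl⟩; exact dist_nonneg⟩ (Set.mem_image2_of_mem ha hb)

namespace Cube

variable {d : ℕ}

lemma center_mem (Q : Cube d) : Q.center ∈ Q.toSet := by
  have := Q.side_pos
  simp only [Cube.toSet, Metric.mem_closedBall, dist_self]
  linarith

lemma dist_le_side (Q : Cube d) {x y : Fin d → ℝ} (hx : x ∈ Q.toSet) (hy : y ∈ Q.toSet) :
    dist x y ≤ Q.side := by
  simp only [Cube.toSet, Metric.mem_closedBall] at hx hy
  linarith [dist_triangle_right x y Q.center]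

lemma exists_dist_le_setDist (Q S : Cube d) :
    ∃ a ∈ Q.toSet, ∃ b ∈ S.toSet, dist a b ≤ setDist Q.toSet S.toSet := by
  have hK : IsCompact (Q.toSet ×ˢ S.toSet) :=
    (isCompact_closedBall _ _).prod (isCompact_closedBall _ _)
  obtain ⟨p, hp, hmin⟩ := hK.exists_isMinOn ⟨(Q.center, S.center), Q.center_mem, S.center_mem⟩
    (continuous_dist.continuousOn : ContinuousOn (fun p : _ × _ => dist p.1 p.2) _)
  refine ⟨p.1, hp.1, p.2, hp.2, le_csInf ⟨_, Set.mem_image2_of_mem Q.center_mem S.center_mem⟩ ?_⟩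
  rintro _ ⟨a, ha, b, hb, rfl⟩
  exact hmin (Set.mk_mem_prod ha hb)

end Cube

lemma longDist_nonneg {d : ℕ} (Q S : Cube d) : 0 ≤ longDist Q S := by
  unfold longDist
  linarith [Q.side_pos, S.side_pos, setDist_nonneg Q.toSet S.toSet]

lemma longDist_triangle {d : ℕ} (Q B S : Cube d) :
    longDist Q S ≤ longDist Q B + longDist B S := by
  obtain ⟨a, ha, b, hb, hab⟩ := Q.exists_dist_le_setDist B
  obtain ⟨b', hb', s, hs, hbs⟩ := B.exists_dist_le_setDist S
  have hQS : setDist Q.toSet S.toSet ≤ dist a s := setDist_le_dist ha hs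
  unfold longDist
  linarith [dist_triangle4 a b b' s, B.dist_le_side hb hb', B.side_pos]

namespace AdmissibleChain

variable {d : ℕ} {Ω : Set (Fin d → ℝ)} {W : WhitneyCovering d Ω} {ε : ℝ} {Q S : Cube d}

def central (ch : AdmissibleChain W ε Q S) : Cube d := ch.c ch.j₀

lemma central_side_le_sum_side (ch : AdmissibleChain W ε Q S) :
    ch.central.side ≤ ∑ j, (ch.c j).side :=
  Finset.single_le_sum (fun j _ => (ch.c j).side_pos.le) (Finset.mem_univ ch.j₀)

lemma longDist_le_central_side (ch : AdmissibleChain W ε Q S) (hε : 0 < ε) :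
    longDist Q S ≤ 2 * ε⁻¹ * ch.central.side := by
  have hQ : longDist Q ch.central ≤ ε⁻¹ * ch.central.side :=
    (le_inv_mul_iff₀ hε).2 (ch.growth₁ ch.j₀ le_rfl)
  have hS : longDist ch.central S ≤ ε⁻¹ * ch.central.side :=
    (le_inv_mul_iff₀ hε).2 (ch.growth₂ ch.j₀ le_rfl)
  linarith [longDist_triangle Q ch.central S]

end AdmissibleChain

theorem stmt_18_general (d : ℕ) (ε : ℝ) (hε : 0 < ε) :
    ∃ C : ℝ, 0 < C ∧
      ∀ (Ω : Set (Fin d → ℝ)), IsOpen Ω → IsConnected Ω → Ω ≠ Set.univ →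
      ∀ (W : WhitneyCovering d Ω), IsUniformDomain W ε →
      ∀ Q S : Cube d, Q ∈ W.cubes → S ∈ W.cubes →
      ∀ ch : AdmissibleChain W ε Q S,
        (C⁻¹ * longDist Q S ≤ ∑ j, (ch.c j).side) ∧
        (∑ j, (ch.c j).side ≤ C * longDist Q S) ∧
        (C⁻¹ * longDist Q S ≤ (ch.c ch.j₀).side) ∧
        ((ch.c ch.j₀).side ≤ C * longDist Q S) := by
  have hC : 0 < 2 * ε⁻¹ := by positivity
  refine ⟨2 * ε⁻¹, hC, fun Ω _ _ _ W _ Q S _ _ ch => ?_⟩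
  have hD_le_central : longDist Q S ≤ 2 * ε⁻¹ * ch.central.side :=
    ch.longDist_le_central_side hε
  have hsum_le_D : ∑ j, (ch.c j).side ≤ 2 * ε⁻¹ * longDist Q S :=
    ch.length_le.trans (by nlinarith [longDist_nonneg Q S, inv_pos.2 hε])
  have hcentral_le_sum := ch.central_side_le_sum_side
  refine ⟨?_, hsum_le_D, ?_, hcentral_le_sum.trans hsum_le_D⟩
  · rw [inv_mul_le_iff₀ hC]
    exact hD_le_central.trans (mul_le_mul_of_nonneg_left hcentral_le_sum hC.le)
  · rw [inv_mul_le_iff₀ hC]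
    exact hD_le_central

/-- for an `ε`-uniform domain `Ω` with Whitney covering `W` and an
`ε`-admissible chain `[Q,S]` with central cube `Q_S`,
`D(Q,S) ≈ Σ_{P∈[Q,S]} ℓ(P) ≈ ℓ(Q_S)`, with comparability constants depending only on `ε`
and `d`. -/
theorem stmt_18 (d : ℕ) (hd : 1 ≤ d) (ε : ℝ) (hε : 0 < ε) :
    ∃ C : ℝ, 0 < C ∧
      ∀ (Ω : Set (Fin d → ℝ)), IsOpen Ω → IsConnected Ω → Ω ≠ Set.univ →
      ∀ (W : WhitneyCovering d Ω), IsUniformDomain W ε →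
      ∀ Q S : Cube d, Q ∈ W.cubes → S ∈ W.cubes →
      ∀ ch : AdmissibleChain W ε Q S,
        (C⁻¹ * longDist Q S ≤ ∑ j, (ch.c j).side) ∧
        (∑ j, (ch.c j).side ≤ C * longDist Q S) ∧
        (C⁻¹ * longDist Q S ≤ (ch.c ch.j₀).side) ∧
        ((ch.c ch.j₀).side ≤ C * longDist Q S) :=
  stmt_18_general d ε hε
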